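/- Let φ = (1+√5)/2 be the golden ratio, and let η be the 3×3 matrix η = [[1/2, −φ/2, 1/(2φ)], [φ/2, 1/(2φ), −1/2], [1/(2φ), 1/2, φ/2]]. Let α = [[1,0,0],[0,−1,0],[0,0,−1]] and γ = [[0,1,0],[0,0,1],[1,0,0]]. Suppose V : ℝ³ → ℝ³ is a continuously differentiable vector field satisfying ∇×V = V, α⁻¹ ∘ V ∘ α = V, and γ⁻¹ ∘ V ∘ γ = V. Define the induced vector field W = Σ_{j=0}^{4} η^{−j} ∘ V ∘ η^{j}. Then: (1) ∇×W = W; and (2) ε⁻¹ ∘ W ∘ ε = W for ε equal to each of α, γ, and η (hence for every ε in the icosahedral group 𝕀 = ⟨α,γ,η⟩ of order 60). -/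

import Mathlib

/-!
The curl of a field is the axial vector of the skew part of its Jacobian, and for every matrix `B`
one has `axial (Bᵀ M B) = adj B · axial M`. For a rotation `R` we have `R⁻¹ = Rᵀ = adj R`, so the
pullback `R⁻¹ ∘ V ∘ R` of a Beltrami field is again Beltrami, and so is the sum `W` of the five
pullbacks by `η ^ j`.

The powers `η ^ j`, `j < 5`, represent the five right cosets of the tetrahedral group
`T = ⟨α, γ⟩` in `𝕀`: for `β ∈ {α, γ, η}` we have `η ^ j β = w η ^ σ(j)` with `w ∈ T` and `σ` a
permutation of `Fin 5`. Since `V` is `T`-invariant, pulling `W` back by `β` only permutes its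
summands.
-/

noncomputable section

open Real

/-- The standard harmonic polynomial `P_n(x,y) = Re((x+iy)^n)`. -/
def polyP (n : ℕ) (x y : ℝ) : ℝ := ((x + y * Complex.I) ^ n).re

/-- The standard harmonic polynomial `Q_n(x,y) = Im((x+iy)^n)`. -/
def polyQ (n : ℕ) (x y : ℝ) : ℝ := ((x + y * Complex.I) ^ n).im

/-- Partial derivative in the `i`-th coordinate direction. -/
def pd (i : Fin 3) (F : (Fin 3 → ℝ) → ℝ) : (Fin 3 → ℝ) → ℝ :=
  fun v => deriv (fun t => F (Function.update v i t)) (v i)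

/-- Divergence of a vector field on ℝ³. -/
def div3 (V : (Fin 3 → ℝ) → (Fin 3 → ℝ)) : (Fin 3 → ℝ) → ℝ :=
  fun v => pd 0 (fun w => V w 0) v + pd 1 (fun w => V w 1) v + pd 2 (fun w => V w 2) v

/-- Curl of a vector field on ℝ³. -/
def curl3 (V : (Fin 3 → ℝ) → (Fin 3 → ℝ)) : (Fin 3 → ℝ) → (Fin 3 → ℝ) :=
  fun v => ![pd 1 (fun w => V w 2) v - pd 2 (fun w => V w 1) v,
             pd 2 (fun w => V w 0) v - pd 0 (fun w => V w 2) v,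
             pd 0 (fun w => V w 1) v - pd 1 (fun w => V w 0) v]

/-- Laplacian of a scalar function on ℝ³. -/
def lap3 (F : (Fin 3 → ℝ) → ℝ) : (Fin 3 → ℝ) → ℝ :=
  fun v => pd 0 (pd 0 F) v + pd 1 (pd 1 F) v + pd 2 (pd 2 F) v

open Matrix

lemma pd_eq_fderiv {F : (Fin 3 → ℝ) → ℝ} {v : Fin 3 → ℝ} (hF : DifferentiableAt ℝ F v)
    (i : Fin 3) : pd i F v = fderiv ℝ F v (Pi.single i 1) :=
  (hF.hasFDerivAt.comp_hasDerivAt_of_eq (v i) (hasDerivAt_update v i (v i))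
    (Function.update_eq_self i v).symm).deriv

/-- The curl of the linear field `x ↦ M *ᵥ x`. -/
def axial : Matrix (Fin 3) (Fin 3) ℝ →ₗ[ℝ] (Fin 3 → ℝ) where
  toFun M := ![M 2 1 - M 1 2, M 0 2 - M 2 0, M 1 0 - M 0 1]
  map_add' M N := by ext k; fin_cases k <;> simp <;> ring
  map_smul' c M := by ext k; fin_cases k <;> simp <;> ring

/-- Entry `(k, i)` is `∂ V_k / ∂ x_i`. -/
def jacobian (V : (Fin 3 → ℝ) → (Fin 3 → ℝ)) (v : Fin 3 → ℝ) : Matrix (Fin 3) (Fin 3) ℝ :=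
  LinearMap.toMatrix' (fderiv ℝ V v : (Fin 3 → ℝ) →ₗ[ℝ] (Fin 3 → ℝ))

lemma curl3_eq_axial_jacobian {V : (Fin 3 → ℝ) → (Fin 3 → ℝ)} {v : Fin 3 → ℝ}
    (hV : DifferentiableAt ℝ V v) : curl3 V v = axial (jacobian V v) := by
  have hpd : ∀ i k, pd i (fun w => V w k) v = jacobian V v k i := fun i k => by
    rw [pd_eq_fderiv (differentiableAt_pi.mp hV k), fderiv_apply hV, jacobian,
      LinearMap.toMatrix'_apply]
    rfl
  ext k; fin_cases k <;> simp [curl3, axial, hpd]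

lemma axial_transpose_mul_mul (B M : Matrix (Fin 3) (Fin 3) ℝ) :
    axial (Bᵀ * M * B) = B.adjugate *ᵥ axial M := by
  ext k; fin_cases k <;>
    simp [axial, adjugate_fin_three, mul_apply, Fin.sum_univ_three, mulVec, dotProduct] <;> ring

lemma hasFDerivAt_mulVec (B : Matrix (Fin 3) (Fin 3) ℝ) (v : Fin 3 → ℝ) :
    HasFDerivAt (B *ᵥ ·) (LinearMap.toContinuousLinearMap (toLin' B)) v :=
  (LinearMap.toContinuousLinearMap (toLin' B)).hasFDerivAt

lemma hasFDerivAt_mulVec_comp_mulVec (C B : Matrix (Fin 3) (Fin 3) ℝ)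
    {V : (Fin 3 → ℝ) → (Fin 3 → ℝ)} {v : Fin 3 → ℝ} (hV : DifferentiableAt ℝ V (B *ᵥ v)) :
    HasFDerivAt (fun w => C *ᵥ V (B *ᵥ w)) ((LinearMap.toContinuousLinearMap (toLin' C)).comp
      ((fderiv ℝ V (B *ᵥ v)).comp (LinearMap.toContinuousLinearMap (toLin' B)))) v :=
  (hasFDerivAt_mulVec C _).comp v (hV.hasFDerivAt.comp v (hasFDerivAt_mulVec B v))

lemma curl3_transpose_conj (B : Matrix (Fin 3) (Fin 3) ℝ) {V : (Fin 3 → ℝ) → (Fin 3 → ℝ)}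
    {v : Fin 3 → ℝ} (hV : DifferentiableAt ℝ V (B *ᵥ v)) :
    curl3 (fun w => Bᵀ *ᵥ V (B *ᵥ w)) v = B.adjugate *ᵥ curl3 V (B *ᵥ v) := by
  have h := hasFDerivAt_mulVec_comp_mulVec Bᵀ B hV
  have hjac : jacobian (fun w => Bᵀ *ᵥ V (B *ᵥ w)) v = Bᵀ * jacobian V (B *ᵥ v) * B := by
    rw [jacobian, h.fderiv]
    simp [jacobian, LinearMap.toMatrix'_comp, Matrix.mul_assoc]
  rw [curl3_eq_axial_jacobian h.differentiableAt, curl3_eq_axial_jacobian hV, hjac,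
    axial_transpose_mul_mul]

lemma curl3_sum {ι : Type*} (s : Finset ι) {U : ι → (Fin 3 → ℝ) → (Fin 3 → ℝ)} {v : Fin 3 → ℝ}
    (hU : ∀ i ∈ s, DifferentiableAt ℝ (U i) v) :
    curl3 (fun w => ∑ i ∈ s, U i w) v = ∑ i ∈ s, curl3 (U i) v := by
  rw [curl3_eq_axial_jacobian (DifferentiableAt.fun_sum hU), jacobian, fderiv_fun_sum hU]
  simp [map_sum, Finset.sum_congr rfl fun i hi => curl3_eq_axial_jacobian (hU i hi), jacobian]

section Pullback

variable {n K : Type*} [Fintype n] [DecidableEq n] [CommRing K]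

def pullback (A : Matrix n n K) (V : (n → K) → (n → K)) : (n → K) → (n → K) :=
  fun v => A⁻¹ *ᵥ V (A *ᵥ v)

lemma pullback_one (V : (n → K) → (n → K)) : pullback 1 V = V := by
  funext v; simp [pullback]

lemma pullback_mul (A B : Matrix n n K) (V : (n → K) → (n → K)) :
    pullback (A * B) V = pullback B (pullback A V) := by
  funext v; simp only [pullback, Matrix.mul_inv_rev, Matrix.mulVec_mulVec]

lemma pullback_sum {ι : Type*} (s : Finset ι) (A : Matrix n n K) (U : ι → (n → K) → (n → K)) :
    pullback A (∑ i ∈ s, U i) = ∑ i ∈ s, pullback A (U i) := by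
  funext v
  simp only [pullback, Finset.sum_apply]
  exact map_sum A⁻¹.mulVecLin _ s

def pullbackStabilizer (V : (n → K) → (n → K)) : Submonoid (Matrix n n K) where
  carrier := {A | pullback A V = V}
  mul_mem' {A B} hA hB := (pullback_mul A B V).trans ((congrArg (pullback B) hA).trans hB)
  one_mem' := pullback_one V

def inducedField {ι : Type*} [Fintype ι] (g : ι → Matrix n n K) (V : (n → K) → (n → K)) :
    (n → K) → (n → K) :=
  ∑ i, pullback (g i) V

end Pullback

def PermutesRightCosets {M ι : Type*} [Monoid M] (S : Submonoid M) (g : ι → M) (β : M) : Prop :=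
  ∃ σ : Equiv.Perm ι, ∀ i, ∃ w ∈ S, g i * β = w * g (σ i)

lemma PermutesRightCosets.mono {M ι : Type*} [Monoid M] {S T : Submonoid M} {g : ι → M} {β : M}
    (h : PermutesRightCosets S g β) (hST : S ≤ T) : PermutesRightCosets T g β := by
  obtain ⟨σ, hσ⟩ := h
  exact ⟨σ, fun i => (hσ i).imp fun w hw => ⟨hST hw.1, hw.2⟩⟩

lemma permutesRightCosets_pow_self {M : Type*} [Monoid M] (S : Submonoid M) {g : M} {n : ℕ}
    (hg : g ^ (n + 1) = 1) : PermutesRightCosets S (fun j : Fin (n + 1) => g ^ (j : ℕ)) g := by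
  refine ⟨finRotate (n + 1), fun i => ⟨1, one_mem S, ?_⟩⟩
  change g ^ (i : ℕ) * g = 1 * g ^ (finRotate (n + 1) i : ℕ)
  rw [one_mul, ← pow_succ, coe_finRotate]
  split_ifs with h
  · rw [h, Fin.val_last, hg, pow_zero]
  · rfl

theorem pullback_inducedField_eq_self {n K ι : Type*} [Fintype n] [DecidableEq n] [CommRing K]
    [Fintype ι] {g : ι → Matrix n n K} {V : (n → K) → (n → K)} {β : Matrix n n K}
    (h : PermutesRightCosets (pullbackStabilizer V) g β) :
    pullback β (inducedField g V) = inducedField g V := by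
  obtain ⟨σ, hσ⟩ := h
  have hterm : ∀ i, pullback β (pullback (g i) V) = pullback (g (σ i)) V := fun i => by
    obtain ⟨w, hw, hgβ⟩ := hσ i
    rw [← pullback_mul, hgβ, pullback_mul, hw]
  simp only [inducedField, pullback_sum, hterm]
  exact Equiv.sum_comp σ fun i => pullback (g i) V

section Rotation

variable {V : (Fin 3 → ℝ) → (Fin 3 → ℝ)}

lemma differentiableAt_pullback (A : Matrix (Fin 3) (Fin 3) ℝ) (hV : Differentiable ℝ V)
    (v : Fin 3 → ℝ) : DifferentiableAt ℝ (pullback A V) v :=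
  (hasFDerivAt_mulVec_comp_mulVec A⁻¹ A (hV _)).differentiableAt

lemma curl3_pullback {A : Matrix (Fin 3) (Fin 3) ℝ} (hA : A ∈ specialOrthogonalGroup (Fin 3) ℝ)
    (hV : Differentiable ℝ V) (v : Fin 3 → ℝ) :
    curl3 (pullback A V) v = pullback A (curl3 V) v := by
  obtain ⟨hAo, hdet⟩ := mem_specialOrthogonalGroup_iff.mp hA
  have hinv : A⁻¹ = Aᵀ := inv_eq_right_inv ((mem_orthogonalGroup_iff (Fin 3) ℝ).mp hAo)
  have hadj : A.adjugate = A⁻¹ := (inv_eq_left_inv (by rw [adjugate_mul, hdet, one_smul])).symm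
  rw [show pullback A V = fun w => Aᵀ *ᵥ V (A *ᵥ w) by rw [← hinv]; rfl,
    curl3_transpose_conj A (hV _), hadj]
  rfl

lemma curl3_inducedField {ι : Type*} [Fintype ι] {g : ι → Matrix (Fin 3) (Fin 3) ℝ}
    (hg : ∀ i, g i ∈ specialOrthogonalGroup (Fin 3) ℝ) (hV : Differentiable ℝ V)
    (hBel : ∀ v, curl3 V v = V v) (v : Fin 3 → ℝ) :
    curl3 (inducedField g V) v = inducedField g V v := by
  have hterm : ∀ i, curl3 (pullback (g i) V) v = pullback (g i) V v := fun i => by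
    rw [curl3_pullback (hg i) hV, show curl3 V = V from funext hBel]
  rw [inducedField, Finset.sum_fn, curl3_sum _ fun i _ => differentiableAt_pullback (g i) hV v]
  simp only [hterm]

end Rotation

section Icosahedral
open goldenRatio

def etaMat : Matrix (Fin 3) (Fin 3) ℝ :=
  !![1/2, -φ/2, 1/(2*φ); φ/2, 1/(2*φ), -1/2; 1/(2*φ), 1/2, φ/2]

def alphaMat : Matrix (Fin 3) (Fin 3) ℝ := !![1, 0, 0; 0, -1, 0; 0, 0, -1]

def gammaMat : Matrix (Fin 3) (Fin 3) ℝ := !![0, 1, 0; 0, 0, 1; 1, 0, 0]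

lemma one_div_two_mul_goldenRatio : 1 / (2 * φ) = (φ - 1) / 2 := by
  rw [one_div, mul_inv, inv_goldenRatio, ← one_sub_goldenConj]
  ring

lemma etaMat_eq : etaMat = !![1/2, -φ/2, (φ-1)/2; φ/2, (φ-1)/2, -1/2; (φ-1)/2, 1/2, φ/2] := by
  rw [etaMat, one_div_two_mul_goldenRatio]

lemma etaMat_sq : etaMat ^ 2 = !![(1-φ)/2, -1/2, φ/2; 1/2, -φ/2, (1-φ)/2; φ/2, (φ-1)/2, 1/2] := by
  rw [sq, etaMat_eq]
  ext i j; fin_cases i <;> fin_cases j <;>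
    simp [mul_apply, Fin.sum_univ_three] <;> grind [goldenRatio_sq]

lemma etaMat_pow_three : etaMat ^ 3 =
    !![(1-φ)/2, 1/2, φ/2; -1/2, -φ/2, (φ-1)/2; φ/2, (1-φ)/2, 1/2] := by
  rw [pow_succ, etaMat_sq, etaMat_eq]
  ext i j; fin_cases i <;> fin_cases j <;>
    simp [mul_apply, Fin.sum_univ_three] <;> grind [goldenRatio_sq]

lemma etaMat_pow_four : etaMat ^ 4 =
    !![1/2, φ/2, (φ-1)/2; -φ/2, (φ-1)/2, 1/2; (φ-1)/2, -1/2, φ/2] := by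
  rw [pow_succ, etaMat_pow_three, etaMat_eq]
  ext i j; fin_cases i <;> fin_cases j <;>
    simp [mul_apply, Fin.sum_univ_three] <;> grind [goldenRatio_sq]

lemma etaMat_pow_five : etaMat ^ 5 = 1 := by
  rw [pow_succ, etaMat_pow_four, etaMat_eq]
  ext i j; fin_cases i <;> fin_cases j <;>
    simp [mul_apply, Fin.sum_univ_three, one_apply] <;> grind [goldenRatio_sq]

lemma etaMat_mem_specialOrthogonalGroup : etaMat ∈ specialOrthogonalGroup (Fin 3) ℝ := by
  refine mem_specialOrthogonalGroup_iff.mpr ⟨(mem_orthogonalGroup_iff (Fin 3) ℝ).mpr ?_, ?_⟩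
  · rw [etaMat_eq]
    ext i j; fin_cases i <;> fin_cases j <;>
      simp [mul_apply, Fin.sum_univ_three, one_apply] <;> grind [goldenRatio_sq]
  · rw [etaMat_eq, det_fin_three]
    simp only [one_div, Fin.isValue, of_apply, cons_val', cons_val_zero, cons_val_fin_one,
      cons_val_one, cons_val]
    linear_combination (3 / 4) * goldenRatio_sq

lemma etaMat_pow_mul_alphaMat :
    etaMat * alphaMat = alphaMat * gammaMat * alphaMat * etaMat ^ 3 ∧
    etaMat ^ 2 * alphaMat = gammaMat * gammaMat * alphaMat * etaMat ^ 4 ∧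
    etaMat ^ 3 * alphaMat = gammaMat * alphaMat * gammaMat * etaMat ∧
    etaMat ^ 4 * alphaMat = alphaMat * gammaMat * etaMat ^ 2 := by
  simp only [etaMat_sq, etaMat_pow_three, etaMat_pow_four]
  rw [etaMat_eq, alphaMat, gammaMat]
  refine ⟨?_, ?_, ?_, ?_⟩ <;> ext i j <;> fin_cases i <;> fin_cases j <;>
    simp [mul_apply, Fin.sum_univ_three] <;> grind [goldenRatio_sq]

lemma etaMat_pow_mul_gammaMat :
    etaMat * gammaMat = gammaMat * alphaMat * gammaMat * gammaMat * etaMat ^ 2 ∧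
    etaMat ^ 2 * gammaMat = gammaMat * alphaMat * etaMat ^ 4 ∧
    etaMat ^ 3 * gammaMat = alphaMat * gammaMat * gammaMat * etaMat ^ 3 ∧
    etaMat ^ 4 * gammaMat = gammaMat * gammaMat * etaMat := by
  simp only [etaMat_sq, etaMat_pow_three, etaMat_pow_four]
  rw [etaMat_eq, alphaMat, gammaMat]
  refine ⟨?_, ?_, ?_, ?_⟩ <;> ext i j <;> fin_cases i <;> fin_cases j <;>
    simp [mul_apply, Fin.sum_univ_three] <;> grind [goldenRatio_sq]

def tetrahedralGroup : Submonoid (Matrix (Fin 3) (Fin 3) ℝ) :=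
  Submonoid.closure {alphaMat, gammaMat}

lemma alphaMat_mem_tetrahedralGroup : alphaMat ∈ tetrahedralGroup :=
  Submonoid.subset_closure (by simp)

lemma gammaMat_mem_tetrahedralGroup : gammaMat ∈ tetrahedralGroup :=
  Submonoid.subset_closure (by simp)

lemma tetrahedralGroup_le_pullbackStabilizer {V : (Fin 3 → ℝ) → (Fin 3 → ℝ)}
    (hα : pullback alphaMat V = V) (hγ : pullback gammaMat V = V) :
    tetrahedralGroup ≤ pullbackStabilizer V :=
  Submonoid.closure_le.mpr (Set.insert_subset_iff.mpr ⟨hα, Set.singleton_subset_iff.mpr hγ⟩)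

lemma permutesRightCosets_alphaMat :
    PermutesRightCosets tetrahedralGroup (fun j : Fin 5 => etaMat ^ (j : ℕ)) alphaMat := by
  obtain ⟨h1, h2, h3, h4⟩ := etaMat_pow_mul_alphaMat
  have hα := alphaMat_mem_tetrahedralGroup
  have hγ := gammaMat_mem_tetrahedralGroup
  refine ⟨Equiv.swap 1 3 * Equiv.swap 2 4, fun i => ?_⟩
  fin_cases i
  · exact ⟨alphaMat, hα, by simp [Equiv.swap_apply_def]⟩
  · exact ⟨_, mul_mem (mul_mem hα hγ) hα, by simpa [Equiv.swap_apply_def] using h1⟩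
  · exact ⟨_, mul_mem (mul_mem hγ hγ) hα, by simpa [Equiv.swap_apply_def] using h2⟩
  · exact ⟨_, mul_mem (mul_mem hγ hα) hγ, by simpa [Equiv.swap_apply_def] using h3⟩
  · exact ⟨_, mul_mem hα hγ, by simpa [Equiv.swap_apply_def] using h4⟩

lemma permutesRightCosets_gammaMat :
    PermutesRightCosets tetrahedralGroup (fun j : Fin 5 => etaMat ^ (j : ℕ)) gammaMat := by
  obtain ⟨h1, h2, h3, h4⟩ := etaMat_pow_mul_gammaMat
  have hα := alphaMat_mem_tetrahedralGroup
  have hγ := gammaMat_mem_tetrahedralGroup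
  refine ⟨Equiv.swap 1 2 * Equiv.swap 2 4, fun i => ?_⟩
  fin_cases i
  · exact ⟨gammaMat, hγ, by simp [Equiv.swap_apply_def]⟩
  · exact ⟨_, mul_mem (mul_mem (mul_mem hγ hα) hγ) hγ, by simpa [Equiv.swap_apply_def] using h1⟩
  · exact ⟨_, mul_mem hγ hα, by simpa [Equiv.swap_apply_def] using h2⟩
  · exact ⟨_, mul_mem (mul_mem hα hγ) hγ, by simpa [Equiv.swap_apply_def] using h3⟩
  · exact ⟨_, mul_mem hγ hγ, by simpa [Equiv.swap_apply_def] using h4⟩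

end Icosahedral

open Matrix in
theorem icosahedral_induced_field
    (φ : ℝ) (hφ : φ = (1 + Real.sqrt 5) / 2)
    (η : Matrix (Fin 3) (Fin 3) ℝ)
    (hη : η = !![1/2, -φ/2, 1/(2*φ); φ/2, 1/(2*φ), -1/2; 1/(2*φ), 1/2, φ/2])
    (α : Matrix (Fin 3) (Fin 3) ℝ) (hα : α = !![1, 0, 0; 0, -1, 0; 0, 0, -1])
    (γ : Matrix (Fin 3) (Fin 3) ℝ) (hγ : γ = !![0, 1, 0; 0, 0, 1; 1, 0, 0])
    (V : (Fin 3 → ℝ) → (Fin 3 → ℝ)) (hV : ContDiff ℝ 1 V)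
    (hBel : ∀ v, curl3 V v = V v)
    (hinvα : ∀ v, α⁻¹.mulVec (V (α.mulVec v)) = V v)
    (hinvγ : ∀ v, γ⁻¹.mulVec (V (γ.mulVec v)) = V v)
    (W : (Fin 3 → ℝ) → (Fin 3 → ℝ))
    (hW : ∀ v, W v = ∑ j ∈ Finset.range 5, (η ^ j)⁻¹.mulVec (V ((η ^ j).mulVec v))) :
    (∀ v, curl3 W v = W v) ∧
    (∀ v, α⁻¹.mulVec (W (α.mulVec v)) = W v) ∧
    (∀ v, γ⁻¹.mulVec (W (γ.mulVec v)) = W v) ∧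
    (∀ v, η⁻¹.mulVec (W (η.mulVec v)) = W v) := by
  obtain rfl : η = etaMat := by rw [hη, hφ]; rfl
  obtain rfl : α = alphaMat := hα
  obtain rfl : γ = gammaMat := hγ
  obtain rfl : W = inducedField (fun j : Fin 5 => etaMat ^ (j : ℕ)) V := by
    funext v
    rw [hW, inducedField, Finset.sum_apply, ← Fin.sum_univ_eq_sum_range]
    rfl
  have hT := tetrahedralGroup_le_pullbackStabilizer (funext hinvα) (funext hinvγ)
  refine ⟨curl3_inducedField (fun j => pow_mem etaMat_mem_specialOrthogonalGroup _)
    (hV.differentiable one_ne_zero) hBel, ?_, ?_, ?_⟩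
  · exact congrFun (pullback_inducedField_eq_self (permutesRightCosets_alphaMat.mono hT))
  · exact congrFun (pullback_inducedField_eq_self (permutesRightCosets_gammaMat.mono hT))
  · exact congrFun (pullback_inducedField_eq_self (permutesRightCosets_pow_self _ etaMat_pow_five))
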